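/- arXiv:2512.08583 — 4 statements merged into one kernel-verified Lean document; each statement's English description precedes it below -/
import Mathlib

section
/- Commutation of element convolution and disjointness matrices: for any element e ∈ [n] and any integer k, C_{n,e} · D_{n,k} = D_{n,k} · C_{n,e}^T, where both matrix products are over an arbitrary semiring S. Concretely, both products, evaluated at (A, B), equal 1 if e ∉ A ∪ B, A ∩ B = ∅ and |A ∪ B| ≤ k − 1, and equal 0 otherwise. -/
open Matrix

/-- Element convolution matrix `C_{n,e}` over a semiring `S`. -/
def convC (S : Type*) [Semiring S] (n : ℕ) (e : Fin n) :
    Matrix (Finset (Fin n)) (Finset (Fin n)) S :=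
  fun A B => if e ∉ A ∧ insert e A = B then 1 else 0

/-- Disjointness matrix `D_{n,k}` over a semiring `S`. -/
def disjD (S : Type*) [Semiring S] (n k : ℕ) :
    Matrix (Finset (Fin n)) (Finset (Fin n)) S :=
  fun A B => if Disjoint A B ∧ (A ∪ B).card ≤ k then 1 else 0

lemma convC_mul_disjD {S : Type*} [Semiring S] (n k : ℕ) (e : Fin n)
    (A B : Finset (Fin n)) :
    (convC S n e * disjD S n k) A B =
      if e ∉ A ∧ e ∉ B ∧ Disjoint A B ∧ (A ∪ B).card + 1 ≤ k then 1 else 0 := by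
  rw [Matrix.mul_apply]
  by_cases hA : e ∈ A
  · simp [convC, hA]
  · have : ∀ C, convC S n e A C * disjD S n k C B =
        if insert e A = C then disjD S n k C B else 0 := by
      intro C
      simp only [convC, hA, not_false_iff, true_and]
      split <;> simp
    simp only [this]
    rw [Finset.sum_ite_eq Finset.univ (insert e A) (fun C => disjD S n k C B)]
    simp only [Finset.mem_univ, if_true, disjD, hA, not_false_iff, true_and]
    by_cases hB : e ∈ B
    · simp [Finset.disjoint_insert_left, hB]
    · have hAB : e ∉ A ∪ B := by simp [hA, hB]
      rw [Finset.insert_union, Finset.card_insert_of_notMem hAB]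
      simp [Finset.disjoint_insert_left, hB, and_comm]
  
lemma disjD_mul_convCT {S : Type*} [Semiring S] (n k : ℕ) (e : Fin n)
    (A B : Finset (Fin n)) :
    (disjD S n k * (convC S n e)ᵀ) A B =
      if e ∉ A ∧ e ∉ B ∧ Disjoint A B ∧ (A ∪ B).card + 1 ≤ k then 1 else 0 := by
  rw [Matrix.mul_apply]
  by_cases hB : e ∈ B
  · simp [convC, Matrix.transpose_apply, hB]
  · have : ∀ C, disjD S n k A C * (convC S n e)ᵀ C B =
        if insert e B = C then disjD S n k A C else 0 := by
      intro C
      simp only [Matrix.transpose_apply, convC, hB, not_false_iff, true_and]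
      split <;> simp
    simp only [this]
    rw [Finset.sum_ite_eq Finset.univ (insert e B) (fun C => disjD S n k A C)]
    simp only [Finset.mem_univ, if_true, disjD, hB, not_false_iff]
    by_cases hA : e ∈ A
    · simp [Finset.disjoint_insert_right, hA]
    · have hAB : e ∉ A ∪ B := by simp [hA, hB]
      rw [Finset.union_insert, Finset.card_insert_of_notMem hAB]
      simp [Finset.disjoint_insert_right, hA, and_comm, and_assoc, and_left_comm]

/-- `C_{n,e} · D_{n,k} = D_{n,k} · C_{n,e}ᵀ`, and both products at `(A,B)` equal `1`
iff `e ∉ A ∪ B`, `A ∩ B = ∅` and `|A ∪ B| ≤ k - 1`, else `0`. -/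
theorem stmt6 {S : Type*} [Semiring S] (n k : ℕ) (e : Fin n) :
    convC S n e * disjD S n k = disjD S n k * (convC S n e)ᵀ ∧
    (∀ A B : Finset (Fin n),
      (convC S n e * disjD S n k) A B =
        if e ∉ A ∧ e ∉ B ∧ Disjoint A B ∧ (A ∪ B).card + 1 ≤ k then 1 else 0) := by
  refine ⟨?_, fun A B => convC_mul_disjD n k e A B⟩
  ext A B
  rw [convC_mul_disjD, disjD_mul_convCT]
end

section
/- Boolean-rank style factorization of the disjointness matrix via universal families: Let F be a (u,s)-universal family of subsets of [u]. Over any additively idempotent semiring S, define X[A,(F,p)] := 1 if A ⊆ F and |A| ≤ p, else 0, and Y[(F,p),B] := 1 if F ∩ B = ∅ and |B| ≤ s − p, else 0, where F ranges over the family and p over {0,…,s}. Then X·Y = D_{u,s}, i.e., (X·Y)[A,B] = 1 if A ∩ B = ∅ and |A ∪ B| ≤ s, else 0. -/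
open Finset

private lemma cast_eq_one_of_pos {S : Type*} [Semiring S] (hid : ∀ a : S, a + a = a)
    {n : ℕ} (hn : 0 < n) : (n : S) = 1 := by
  induction n with
  | zero => omega
  | succ m ih =>
    rcases Nat.eq_zero_or_pos m with h | h
    · subst h; simp
    · rw [Nat.cast_succ, ih h]; exact hid 1

private lemma sum_boole_idem {S : Type*} [Semiring S] (hid : ∀ a : S, a + a = a)
    {ι : Type*} (t : Finset ι) (P : ι → Prop) [DecidablePred P] :
    (∑ i ∈ t, (if P i then (1 : S) else 0)) =
      if ∃ i ∈ t, P i then 1 else 0 := by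
  rw [Finset.sum_boole]
  split_ifs with h
  · exact cast_eq_one_of_pos hid (Finset.card_pos.2 (by
      obtain ⟨i, hi, hPi⟩ := h; exact ⟨i, Finset.mem_filter.2 ⟨hi, hPi⟩⟩))
  · rw [Finset.filter_false_of_mem, Finset.card_empty, Nat.cast_zero]
    intro i hi hPi; exact h ⟨i, hi, hPi⟩

/-- Factorization of the disjointness matrix `D_{u,s}` via a `(u,s)`-universal
family `𝓕`: with `X[A,(F,p)] = 1` iff `A ⊆ F ∧ |A| ≤ p` and
`Y[(F,p),B] = 1` iff `F ∩ B = ∅ ∧ |B| ≤ s - p`, over an additively idempotent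
semiring we have `X·Y = D_{u,s}`. -/
theorem stmt11 {S : Type*} [Semiring S] (hid : ∀ a : S, a + a = a)
    (u s : ℕ) (𝓕 : Finset (Finset (Fin u)))
    (huniv : ∀ X : Finset (Fin u), X.card ≤ s →
      𝓕.image (fun F => X ∩ F) = X.powerset) :
    (Matrix.of (fun (A : Finset (Fin u)) (Fp : ↥𝓕 × Fin (s + 1)) =>
        if A ⊆ (Fp.1 : Finset (Fin u)) ∧ A.card ≤ (Fp.2 : ℕ) then (1 : S) else 0)) *
    (Matrix.of (fun (Fp : ↥𝓕 × Fin (s + 1)) (B : Finset (Fin u)) =>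
        if Disjoint (Fp.1 : Finset (Fin u)) B ∧ B.card ≤ s - (Fp.2 : ℕ) then (1 : S) else 0))
    = Matrix.of (fun (A B : Finset (Fin u)) =>
        if Disjoint A B ∧ (A ∪ B).card ≤ s then (1 : S) else 0) := by
  funext A B
  rw [Matrix.mul_apply]
  simp only [Matrix.of_apply]
  have hmul : ∀ Fp : ↥𝓕 × Fin (s + 1),
      (if A ⊆ (Fp.1 : Finset (Fin u)) ∧ A.card ≤ (Fp.2 : ℕ) then (1 : S) else 0) *
      (if Disjoint (Fp.1 : Finset (Fin u)) B ∧ B.card ≤ s - (Fp.2 : ℕ) then (1 : S) else 0) =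
      if (A ⊆ (Fp.1 : Finset (Fin u)) ∧ A.card ≤ (Fp.2 : ℕ)) ∧
         Disjoint (Fp.1 : Finset (Fin u)) B ∧ B.card ≤ s - (Fp.2 : ℕ) then (1 : S) else 0 := by
    intro Fp; split_ifs <;> simp_all
  simp only [hmul]
  rw [sum_boole_idem hid]
  congr 1
  apply propext
  constructor
  · rintro ⟨⟨⟨F, hF⟩, p⟩, -, ⟨hAF, hAp⟩, hFB, hBs⟩
    have hAB : Disjoint A B := (Finset.disjoint_of_subset_left hAF hFB)
    refine ⟨hAB, ?_⟩
    have h1 := Finset.card_union_le A B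
    have h2 : (p : ℕ) ≤ s := Nat.lt_succ_iff.mp p.isLt
    omega
  · rintro ⟨hAB, hs⟩
    have hAsub : A ⊆ A ∪ B := Finset.subset_union_left
    have hAmem : A ∈ (A ∪ B).powerset := Finset.mem_powerset.2 hAsub
    rw [← huniv (A ∪ B) hs] at hAmem
    obtain ⟨F, hF, hFA⟩ := Finset.mem_image.mp hAmem
    have hcard : (A ∪ B).card = A.card + B.card := Finset.card_union_of_disjoint hAB
    have hAcard : A.card ≤ s := by omega
    refine ⟨⟨⟨F, hF⟩, ⟨A.card, Nat.lt_succ_of_le hAcard⟩⟩, Finset.mem_univ _, ⟨?_, le_refl _⟩, ?_, ?_⟩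
    · intro x hx
      have : x ∈ (A ∪ B) ∩ F := by rw [hFA]; exact hx
      exact (Finset.mem_inter.mp this).2
    · rw [Finset.disjoint_left]
      intro x hxF hxB
      have : x ∈ (A ∪ B) ∩ F := Finset.mem_inter.2 ⟨Finset.mem_union_right _ hxB, hxF⟩
      rw [hFA] at this
      exact Finset.disjoint_left.mp hAB this hxB
    · simp only []
      omega
end

section
/- Commutation of element convolution with the splitting/hashing matrix: C_{n,e} · H = H · Ĉ_e, where H[A, ((π,σ), A_1,…,A_s)] := 1 if π is injective on A and σ^{-1}(i) ∩ π(A) = A_i for all i ∈ [s], else 0, and Ĉ_e is the block-diagonal matrix whose only nonzero entries are Ĉ_e[((π,σ),A_1,…,A_s), ((π,σ),A_1,…,A_{i-1}, A_i ∪ {π(e)}, A_{i+1},…,A_s)] = 1 whenever π(e) ∉ A_i, with i = σ(π(e)). -/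
/-- The splitting/hashing matrix `H`: `H[A,((π,σ),A₁,…,A_s)] = 1` iff `π` is
injective on `A` and `σ⁻¹(i) ∩ π(A) = A_i` for all `i`. -/
def Hmat (S : Type*) [Semiring S] {n u s : ℕ} {H : Type*}
    (π : H → Fin n → Fin u) (σ : H → Fin u → Fin s) :
    Matrix (Finset (Fin n)) (H × (Fin s → Finset (Fin u))) S :=
  fun A c =>
    if (∀ a ∈ A, ∀ b ∈ A, π c.1 a = π c.1 b → a = b) ∧
       (∀ i : Fin s, (A.image (π c.1)).filter (fun v => σ c.1 v = i) = c.2 i)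
    then 1 else 0

/-- The block-diagonal convolution matrix `Ĉ_e`: its only nonzero entries are at
`((π,σ),A₁,…,A_s), ((π,σ),A₁,…,A_i ∪ {π(e)},…,A_s)` with `i = σ(π(e))` and
`π(e) ∉ A_i`. -/
def Chat (S : Type*) [Semiring S] {n u s : ℕ} {H : Type*} [DecidableEq H]
    (π : H → Fin n → Fin u) (σ : H → Fin u → Fin s) (e : Fin n) :
    Matrix (H × (Fin s → Finset (Fin u))) (H × (Fin s → Finset (Fin u))) S :=
  fun c c' =>
    if c'.1 = c.1 ∧ π c.1 e ∉ c.2 (σ c.1 (π c.1 e)) ∧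
       c'.2 = Function.update c.2 (σ c.1 (π c.1 e))
               (insert (π c.1 e) (c.2 (σ c.1 (π c.1 e))))
    then 1 else 0

/-!
Both sides are read off entrywise. Row `A` of `C_{n,e} · H` at column `((π,σ),F)` is
`H[A ∪ {e}, ((π,σ),F)]` if `e ∉ A` and `0` otherwise; the same entry of `H · Ĉ_e` is
`H[A, ((π,σ),F')]`, where `F'` is `F` with `π(e)` removed from block `i = σ(π(e))`, if
`π(e) ∈ F_i` and `0` otherwise. Adding `e` to `A` adds `π(e)` to block `i` of the split of
`π(A)`, and keeps `π` injective exactly when `π(e)` was not yet in `π(A)`, i.e. not in that block.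
If `e ∈ A`, block `i` of the split of `π(A)` contains `π(e)`, so it cannot equal `F'_i`.
-/

open Finset Function

theorem eq_update_insert_iff {ι β : Type*} [DecidableEq ι] [DecidableEq β]
    {F G : ι → Finset β} {i : ι} {a : β} :
    (a ∉ G i ∧ F = update G i (insert a (G i))) ↔
      (a ∈ F i ∧ G = update F i ((F i).erase a)) := by
  constructor
  · rintro ⟨ha, rfl⟩
    simp [erase_insert ha]
  · rintro ⟨ha, rfl⟩
    simp [insert_erase ha]

section Splitting

variable {α β γ : Type*} [DecidableEq β] [DecidableEq γ]

def splitImage (f : α → β) (g : β → γ) (A : Finset α) (i : γ) : Finset β :=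
  (A.image f).filter (fun v => g v = i)

theorem mem_splitImage_iff {f : α → β} {g : β → γ} {A : Finset α} {b : β} :
    b ∈ splitImage f g A (g b) ↔ b ∈ A.image f := by
  simp [splitImage]

theorem splitImage_insert [DecidableEq α] (f : α → β) (g : β → γ) (A : Finset α) (e : α) :
    splitImage f g (insert e A) =
      update (splitImage f g A) (g (f e)) (insert (f e) (splitImage f g A (g (f e)))) := by
  funext j
  rcases eq_or_ne j (g (f e)) with rfl | hj
  · simp [splitImage, image_insert, filter_insert]
  · simp [splitImage, image_insert, filter_insert, update_of_ne hj, Ne.symm hj]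

theorem splitImage_ne_update_erase {f : α → β} {g : β → γ} {A : Finset α} {e : α}
    (he : e ∈ A) (F : γ → Finset β) :
    splitImage f g A ≠ update F (g (f e)) ((F (g (f e))).erase (f e)) := by
  intro h
  have hmem : f e ∈ splitImage f g A (g (f e)) := mem_splitImage_iff.2 (mem_image_of_mem f he)
  simp [h] at hmem

theorem injOn_insert_and_splitImage_insert_iff [DecidableEq α] {f : α → β} {g : β → γ}
    {A : Finset α} {e : α} (he : e ∉ A) (F : γ → Finset β) :
    (Set.InjOn f ↑(insert e A) ∧ splitImage f g (insert e A) = F) ↔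
      f e ∈ F (g (f e)) ∧ Set.InjOn f ↑A ∧
        splitImage f g A = update F (g (f e)) ((F (g (f e))).erase (f e)) := by
  have hnew : f e ∉ f '' ↑A ↔ f e ∉ splitImage f g A (g (f e)) := by
    rw [mem_splitImage_iff, ← coe_image, mem_coe]
  rw [coe_insert, Set.injOn_insert (mem_coe.not.2 he), hnew, splitImage_insert, and_assoc,
    @eq_comm _ (update _ _ _) F, eq_update_insert_iff, and_left_comm]

end Splitting

section Matrices

variable {S : Type*} [Semiring S] {n u s : ℕ} {H : Type*}

theorem Hmat_apply (π : H → Fin n → Fin u) (σ : H → Fin u → Fin s)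
    (A : Finset (Fin n)) (c : H × (Fin s → Finset (Fin u))) :
    Hmat S π σ A c =
      if Set.InjOn (π c.1) ↑A ∧ splitImage (π c.1) (σ c.1) A = c.2 then 1 else 0 :=
  if_congr (and_congr Iff.rfl funext_iff.symm) rfl rfl

theorem convC_mul_apply (e : Fin n) {κ : Type*} (M : Matrix (Finset (Fin n)) κ S)
    (A : Finset (Fin n)) (c : κ) :
    (convC S n e * M) A c = if e ∈ A then 0 else M (insert e A) c := by
  by_cases he : e ∈ A <;> simp [Matrix.mul_apply, convC, he]

theorem Chat_apply_eq_ite_erase [DecidableEq H] (π : H → Fin n → Fin u)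
    (σ : H → Fin u → Fin s) (e : Fin n) (c' c : H × (Fin s → Finset (Fin u))) :
    Chat S π σ e c' c =
      if π c.1 e ∈ c.2 (σ c.1 (π c.1 e)) ∧
          c' = (c.1, update c.2 (σ c.1 (π c.1 e)) ((c.2 (σ c.1 (π c.1 e))).erase (π c.1 e)))
      then 1 else 0 := by
  obtain ⟨h', F'⟩ := c'
  obtain ⟨h, F⟩ := c
  by_cases hh : h = h'
  · subst hh
    simp only [Chat, true_and, Prod.mk.injEq, eq_update_insert_iff]
  · simp [Chat, hh, Ne.symm hh]

theorem mul_Chat_apply [Fintype H] [DecidableEq H] (π : H → Fin n → Fin u)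
    (σ : H → Fin u → Fin s) (e : Fin n) {ρ : Type*}
    (M : Matrix ρ (H × (Fin s → Finset (Fin u))) S) (A : ρ) (c : H × (Fin s → Finset (Fin u))) :
    (M * Chat S π σ e) A c =
      if π c.1 e ∈ c.2 (σ c.1 (π c.1 e)) then
        M A (c.1, update c.2 (σ c.1 (π c.1 e)) ((c.2 (σ c.1 (π c.1 e))).erase (π c.1 e)))
      else 0 := by
  simp only [Matrix.mul_apply, Chat_apply_eq_ite_erase, ite_and, mul_ite, mul_one, mul_zero]
  split_ifs <;> simp

end Matrices

/-- Commutation of element convolution with the splitting/hashing matrix: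
`C_{n,e} · H = H · Ĉ_e`. -/
theorem stmt15 {S : Type*} [Semiring S] {n u s : ℕ}
    {H : Type*} [Fintype H] [DecidableEq H]
    (π : H → Fin n → Fin u) (σ : H → Fin u → Fin s) (e : Fin n) :
    convC S n e * Hmat S π σ = Hmat S π σ * Chat S π σ e := by
  ext A ⟨h, F⟩
  rw [convC_mul_apply, mul_Chat_apply, Hmat_apply, Hmat_apply]
  by_cases he : e ∈ A
  · simp [he, splitImage_ne_update_erase he]
  · simp only [he, if_false, injOn_insert_and_splitImage_insert_iff he, ite_and]
end

section
/- Splitter composition recovers the disjointness matrix: Suppose P is an (n,k,u)-splitter family with the additional property that for every S ⊆ [n] of size ≤ k there is π ∈ P injective on S, and 𝒮 is a family of functions σ : [u] → [s] such that for every T ⊆ [u] of size ≤ k there is σ ∈ 𝒮 with |σ^{-1}(i) ∩ T| ≤ s for all i ∈ [s], where k = s². Then over any additively idempotent semiring, H · (I ⊗ D_{u,s}^{⊗ s}) · H^T = D_{n,k}, i.e., for all A, B ⊆ [n], Σ_{(π,σ)} [π injective on A]·[π injective on B]·∏_{i=1}^{s} D_{u,s}[σ^{-1}(i) ∩ π(A),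 σ^{-1}(i) ∩ π(B)] = D_{n,k}[A,B]. -/
/-!
Every summand is `0` or `1`, so by idempotence the sum is the indicator that some pair `(π, σ)`
has summand `1`. Such a good pair forces `π(A)` and `π(B)` to be disjoint (every point lies in
some block `σ⁻¹(i)`), hence `π` is injective on `A ∪ B` and `A ∩ B = ∅`; then
`|A ∪ B| = Σᵢ |σ⁻¹(i) ∩ π(A ∪ B)| ≤ s · s`. Conversely, for disjoint `A`, `B` with
`|A ∪ B| ≤ s²` the hypotheses supply a `π` injective on `A ∪ B` and a `σ` splitting `π(A ∪ B)`
into blocks of size at most `s`, and this pair is good.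
-/

open Finset

theorem Nat.cast_eq_one_of_one_add_one {R : Type*} [AddMonoidWithOne R] (h : (1 : R) + 1 = 1)
    {n : ℕ} (hn : n ≠ 0) : (n : R) = 1 := by
  induction n with
  | zero => exact absurd rfl hn
  | succ n ih =>
    rcases eq_or_ne n 0 with rfl | hn'
    · exact Nat.cast_one
    · rw [Nat.cast_succ, ih hn', h]

theorem Finset.sum_boole_of_one_add_one {ι R : Type*} [AddCommMonoidWithOne R]
    (h : (1 : R) + 1 = 1) (p : ι → Prop) [DecidablePred p] (s : Finset ι) :
    (∑ x ∈ s, if p x then 1 else 0 : R) = if ∃ x ∈ s, p x then 1 else 0 := by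
  rw [sum_boole]
  split_ifs with hex
  · exact Nat.cast_eq_one_of_one_add_one h (card_ne_zero.mpr (filter_nonempty_iff.mpr hex))
  · rw [filter_false_of_mem (by simpa using hex), card_empty, Nat.cast_zero]

theorem List.prod_map_boole {ι M₀ : Type*} [MonoidWithZero M₀] (p : ι → Prop) [DecidablePred p]
    (l : List ι) : (l.map fun i => if p i then (1 : M₀) else 0).prod =
      if ∀ i ∈ l, p i then 1 else 0 := by
  induction l with
  | nil => simp
  | cons a l ih => by_cases ha : p a <;> simp [ha, ih]

theorem Finset.disjoint_iff_forall_disjoint_filter {β γ : Type*} [DecidableEq γ] (σ : β → γ)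
    {X Y : Finset β} :
    Disjoint X Y ↔ ∀ i, Disjoint (X.filter (σ · = i)) (Y.filter (σ · = i)) :=
  ⟨fun h _ => disjoint_filter_filter h, fun h => disjoint_left.mpr fun v hvX hvY =>
    disjoint_left.mp (h (σ v)) (mem_filter.mpr ⟨hvX, rfl⟩) (mem_filter.mpr ⟨hvY, rfl⟩)⟩

section Blocks

variable {α β γ : Type*} [DecidableEq α] [DecidableEq β] [DecidableEq γ] (π : α → β) (σ : β → γ)

theorem Finset.injOn_union_and_disjoint_iff {A B : Finset α} :
    Set.InjOn π ↑(A ∪ B) ∧ Disjoint A B ↔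
      Set.InjOn π A ∧ Set.InjOn π B ∧ Disjoint (A.image π) (B.image π) := by
  constructor
  · rintro ⟨hinj, hAB⟩
    rw [coe_union, Set.injOn_union (disjoint_coe.mpr hAB)] at hinj
    obtain ⟨hA, hB, hne⟩ := hinj
    refine ⟨hA, hB, disjoint_iff_ne.mpr ?_⟩
    simp only [forall_mem_image]
    exact hne
  · rintro ⟨hA, hB, hdisj⟩
    have hAB := hdisj.of_image_finset
    rw [coe_union, Set.injOn_union (disjoint_coe.mpr hAB)]
    exact ⟨⟨hA, hB, fun a ha b hb => hdisj.forall_ne_finset (mem_image_of_mem π ha)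
      (mem_image_of_mem π hb)⟩, hAB⟩

theorem Finset.filter_image_union_filter_image (A B : Finset α) (i : γ) :
    (A.image π).filter (σ · = i) ∪ (B.image π).filter (σ · = i) =
      ((A ∪ B).image π).filter (σ · = i) := by
  rw [image_union, filter_union]

theorem disjoint_and_card_union_le_of_blocks [Fintype γ] {A B : Finset α} {s : ℕ}
    (hA : Set.InjOn π A) (hB : Set.InjOn π B)
    (hblock : ∀ i, Disjoint ((A.image π).filter (σ · = i)) ((B.image π).filter (σ · = i)) ∧
      ((A.image π).filter (σ · = i) ∪ (B.image π).filter (σ · = i)).card ≤ s) :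
    Disjoint A B ∧ (A ∪ B).card ≤ s * Fintype.card γ := by
  have hdisj := (disjoint_iff_forall_disjoint_filter σ).mpr fun i => (hblock i).1
  obtain ⟨hinj, hAB⟩ := (injOn_union_and_disjoint_iff π).mpr ⟨hA, hB, hdisj⟩
  refine ⟨hAB, ?_⟩
  rw [← card_image_of_injOn hinj, ← card_univ]
  refine card_le_mul_card_image_of_maps_to (f := σ) (fun _ _ => mem_univ _) s fun i _ => ?_
  rw [← filter_image_union_filter_image]
  exact (hblock i).2

theorem blocks_of_injOn_union {A B : Finset α} {s : ℕ} (hinj : Set.InjOn π ↑(A ∪ B))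
    (hAB : Disjoint A B) (hσ : ∀ i, (((A ∪ B).image π).filter (σ · = i)).card ≤ s) (i : γ) :
    Disjoint ((A.image π).filter (σ · = i)) ((B.image π).filter (σ · = i)) ∧
      ((A.image π).filter (σ · = i) ∪ (B.image π).filter (σ · = i)).card ≤ s :=
  ⟨disjoint_filter_filter ((injOn_union_and_disjoint_iff π).mp ⟨hinj, hAB⟩).2.2,
    filter_image_union_filter_image π σ A B i ▸ hσ i⟩

end Blocks

/-- Splitter composition recovers the disjointness matrix: if every set of size
`≤ k = s²` has an injective `π ∈ P` and every `T ⊆ [u]` of size `≤ k` has a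
`σ ∈ 𝒮` with all blocks `σ⁻¹(i) ∩ T` of size `≤ s`, then over an additively
idempotent semiring,
`Σ_{(π,σ)} [π inj. on A]·[π inj. on B]·∏_i D_{u,s}[σ⁻¹(i)∩π(A), σ⁻¹(i)∩π(B)]
  = D_{n,k}[A,B]`. -/
theorem stmt16 {S : Type*} [Semiring S] (hid : ∀ x : S, x + x = x)
    {n u s k : ℕ} (hk : k = s ^ 2)
    (P : Finset (Fin n → Fin u)) (𝒮 : Finset (Fin u → Fin s))
    (hP : ∀ A : Finset (Fin n), A.card ≤ k →
      ∃ π ∈ P, ∀ a ∈ A, ∀ b ∈ A, π a = π b → a = b)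
    (h𝒮 : ∀ T : Finset (Fin u), T.card ≤ k →
      ∃ σ ∈ 𝒮, ∀ i : Fin s, (T.filter (fun v => σ v = i)).card ≤ s)
    (A B : Finset (Fin n)) :
    (∑ π ∈ P, ∑ σ ∈ 𝒮,
      (if ∀ a ∈ A, ∀ b ∈ A, π a = π b → a = b then (1 : S) else 0) *
      (if ∀ a ∈ B, ∀ b ∈ B, π a = π b → a = b then (1 : S) else 0) *
      ((List.finRange s).map (fun i =>
        if Disjoint ((A.image π).filter (fun v => σ v = i))
              ((B.image π).filter (fun v => σ v = i)) ∧
            (((A.image π).filter (fun v => σ v = i)) ∪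
              ((B.image π).filter (fun v => σ v = i))).card ≤ s
         then (1 : S) else 0)).prod)
    = (if Disjoint A B ∧ (A ∪ B).card ≤ k then (1 : S) else 0) := by
  simp only [List.prod_map_boole, ite_zero_mul_ite_zero, mul_one]
  rw [← sum_product', sum_boole_of_one_add_one (hid 1)]
  refine if_congr ⟨?_, ?_⟩ rfl rfl
  · rintro ⟨⟨π, σ⟩, -, ⟨hA, hB⟩, hblock⟩
    have hAB :=
      disjoint_and_card_union_le_of_blocks π σ hA hB fun i => hblock i (List.mem_finRange i)
    rwa [Fintype.card_fin, ← sq, ← hk] at hAB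
  · rintro ⟨hAB, hcard⟩
    obtain ⟨π, hπ, hinj⟩ : ∃ π ∈ P, Set.InjOn π ↑(A ∪ B) := hP (A ∪ B) hcard
    obtain ⟨σ, hσ, hblock⟩ := h𝒮 ((A ∪ B).image π) (card_image_le.trans hcard)
    exact ⟨(π, σ), mem_product.mpr ⟨hπ, hσ⟩,
      ⟨hinj.mono (coe_subset.mpr subset_union_left), hinj.mono (coe_subset.mpr subset_union_right)⟩,
      fun i _ => blocks_of_injOn_union π σ hinj hAB hblock i⟩
end
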